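/- arXiv:2212.08521 — 2 statements merged into one kernel-verified Lean document; each statement's English description precedes it below -/
import Mathlib

section
/- Let m ≥ 1 and let φ : 𝔻 → ℂ² be a holomorphic immersion (φ'(ζ) ≠ 0 for all ζ) with image contained in 𝔹₂, proper as a map from 𝔻 into 𝔹₂, and complete. Define φ^m : 𝔻^m → ℂ^{2m} by φ^m(ζ₁, …, ζ_m) = (φ(ζ₁), …, φ(ζ_m)). Then φ^m is a holomorphic immersion with image contained in (𝔹₂)^m ⊆ ℂ^{2m}, proper as a map from 𝔻^m into (𝔹₂)^m, and complete: for every divergent path γ : [0,1) → 𝔻^m the path φ^m ∘ γ has infinite length; moreover, if φ is injective then so is φ^m. (The product trick behind Corollaries on complete bounded complex submanifolds of higher dimension.) -/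
open Set Metric
open scoped ENNReal

noncomputable section

/-- A path `γ : [0,1) → E` is a divergent path in the open set `Ω` if it is continuous on
`[0,1)`, takes values in `Ω`, and eventually leaves every compact subset of `Ω`. -/
def DivergentPathIn {E : Type*} [TopologicalSpace E] (Ω : Set E) (γ : ℝ → E) : Prop :=
  ContinuousOn γ (Set.Ico 0 1) ∧
  (∀ t ∈ Set.Ico (0 : ℝ) 1, γ t ∈ Ω) ∧
  ∀ K : Set E, K ⊆ Ω → IsCompact K →
    ∃ t₀ ∈ Set.Ico (0 : ℝ) 1, ∀ t ∈ Set.Ico t₀ 1, γ t ∉ K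

lemma piLp2_norm_apply_le {ι : Type*} [Fintype ι] {E : Type*} [SeminormedAddCommGroup E]
    (x : PiLp 2 fun _ : ι => E) (i : ι) : ‖x i‖ ≤ ‖x‖ := by
  rw [PiLp.norm_eq_of_L2]
  have h1 : ‖x i‖ = √(‖x i‖ ^ 2) := by
    rw [Real.sqrt_sq (norm_nonneg _)]
  rw [h1]
  apply Real.sqrt_le_sqrt
  exact Finset.single_le_sum (f := fun j => ‖x j‖ ^ 2) (fun j _ => sq_nonneg _)
    (Finset.mem_univ i)

lemma piLp2_lip_eval {ι : Type*} [Fintype ι] {E : Type*} [NormedAddCommGroup E] (i : ι) :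
    LipschitzWith 1 (fun w : PiLp 2 (fun _ : ι => E) => w i) := by
  apply LipschitzWith.of_dist_le_mul
  intro x y
  rw [NNReal.coe_one, one_mul, dist_eq_norm, dist_eq_norm]
  simpa using piLp2_norm_apply_le (x - y) i

lemma piLp2_evar_coord_le {ι : Type*} [Fintype ι] {E : Type*} [NormedAddCommGroup E]
    (f : ℝ → PiLp 2 fun _ : ι => E) (s : Set ℝ) (i : ι) :
    eVariationOn (fun t => f t i) s ≤ eVariationOn f s := by
  have := ((piLp2_lip_eval (E := E) i).lipschitzOnWith (s := univ)).comp_eVariationOn_le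
    (g := f) (s := s) (mapsTo_univ f s)
  simpa [Function.comp_def] using this

lemma piLp2_isCompact_pi {ι : Type*} [Fintype ι] {E : Type*} [NormedAddCommGroup E]
    [NormedSpace ℂ E] (L : ι → Set E) (h : ∀ i, IsCompact (L i)) :
    IsCompact {z : PiLp 2 fun _ : ι => E | ∀ i, z i ∈ L i} := by
  have h1 : IsCompact (Set.pi univ L) := isCompact_univ_pi h
  have h2 : {z : PiLp 2 fun _ : ι => E | ∀ i, z i ∈ L i} =
      (PiLp.continuousLinearEquiv 2 ℂ (fun _ : ι => E)) ⁻¹' (Set.pi univ L) := by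
    ext z
    simp [Set.mem_pi]
  rw [h2]
  exact (PiLp.continuousLinearEquiv 2 ℂ (fun _ : ι => E)).toHomeomorph.isCompact_preimage.mpr h1

/-- The product trick: if `φ : 𝔻 → 𝔹₂ ⊆ ℂ²` is a complete proper holomorphic immersion, then
`φ^m : 𝔻^m → (𝔹₂)^m ⊆ ℂ^{2m}`, `φ^m (ζ₁, …, ζ_m) = (φ ζ₁, …, φ ζ_m)`, is a complete proper
holomorphic immersion, injective whenever `φ` is. -/
theorem product_trick_complete_proper_immersion (m : ℕ) (hm : 1 ≤ m)
    (φ : ℂ → EuclideanSpace ℂ (Fin 2))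
    (hdiff : DifferentiableOn ℂ φ (Metric.ball (0 : ℂ) 1))
    (himm : ∀ ζ ∈ Metric.ball (0 : ℂ) 1, deriv φ ζ ≠ 0)
    (himg : ∀ ζ ∈ Metric.ball (0 : ℂ) 1, φ ζ ∈ Metric.ball (0 : EuclideanSpace ℂ (Fin 2)) 1)
    (hproper : ∀ K : Set (EuclideanSpace ℂ (Fin 2)),
      K ⊆ Metric.ball (0 : EuclideanSpace ℂ (Fin 2)) 1 → IsCompact K →
      IsCompact {ζ ∈ Metric.ball (0 : ℂ) 1 | φ ζ ∈ K})
    (hcomplete : ∀ γ : ℝ → ℂ, DivergentPathIn (Metric.ball (0 : ℂ) 1) γ →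
      eVariationOn (fun t => φ (γ t)) (Set.Ico 0 1) = ⊤)
    (Φ : EuclideanSpace ℂ (Fin m) → PiLp 2 (fun _ : Fin m => EuclideanSpace ℂ (Fin 2)))
    (hΦ : Φ = fun z => WithLp.toLp 2 (fun i => φ (z i)))
    (P : Set (EuclideanSpace ℂ (Fin m))) (hP : P = {z | ∀ i, ‖z i‖ < 1})
    (Q : Set (PiLp 2 fun _ : Fin m => EuclideanSpace ℂ (Fin 2)))
    (hQ : Q = {w | ∀ i, w i ∈ Metric.ball (0 : EuclideanSpace ℂ (Fin 2)) 1}) :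
    DifferentiableOn ℂ Φ P ∧
    (∀ z ∈ P, Function.Injective (fderiv ℂ Φ z)) ∧
    (∀ z ∈ P, Φ z ∈ Q) ∧
    (∀ K : Set (PiLp 2 fun _ : Fin m => EuclideanSpace ℂ (Fin 2)), K ⊆ Q → IsCompact K →
      IsCompact {z ∈ P | Φ z ∈ K}) ∧
    (∀ γ : ℝ → EuclideanSpace ℂ (Fin m), DivergentPathIn P γ →
      eVariationOn (fun t => Φ (γ t)) (Set.Ico 0 1) = ⊤) ∧
    (Set.InjOn φ (Metric.ball (0 : ℂ) 1) → Set.InjOn Φ P) := by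
  subst hΦ hP hQ
  set P : Set (EuclideanSpace ℂ (Fin m)) := {z | ∀ i, ‖z i‖ < 1} with hP
  set Φ : EuclideanSpace ℂ (Fin m) → PiLp 2 (fun _ : Fin m => EuclideanSpace ℂ (Fin 2)) := fun z => WithLp.toLp 2 (fun i => φ (z i)) with hΦ
  have hball : ∀ z ∈ P, ∀ i, z i ∈ Metric.ball (0 : ℂ) 1 :=
    fun z hz i => mem_ball_zero_iff.mpr (hz i)
  -- the derivative of Φ at z
  set e := PiLp.continuousLinearEquiv 2 ℂ (fun _ : Fin m => EuclideanSpace ℂ (Fin 2)) with he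
  set L : EuclideanSpace ℂ (Fin m) → (EuclideanSpace ℂ (Fin m) →L[ℂ] PiLp 2 (fun _ : Fin m => EuclideanSpace ℂ (Fin 2))) := fun z =>
    ((e.symm : (∀ _ : Fin m, EuclideanSpace ℂ (Fin 2)) →L[ℂ] PiLp 2 (fun _ : Fin m => EuclideanSpace ℂ (Fin 2))).comp
      (ContinuousLinearMap.pi fun i =>
        (ContinuousLinearMap.smulRight (1 : ℂ →L[ℂ] ℂ) (deriv φ (z i))).comp
          (PiLp.proj 2 (fun _ : Fin m => ℂ) i))) with hL
  have hfd : ∀ z ∈ P, HasFDerivAt Φ (L z) z := by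
    intro z hz
    have hpi : HasFDerivAt (fun z : EuclideanSpace ℂ (Fin m) => (fun i => φ (z i) : ∀ _ : Fin m, EuclideanSpace ℂ (Fin 2)))
        (ContinuousLinearMap.pi fun i =>
          (ContinuousLinearMap.smulRight (1 : ℂ →L[ℂ] ℂ) (deriv φ (z i))).comp
            (PiLp.proj 2 (fun _ : Fin m => ℂ) i)) z := by
      rw [hasFDerivAt_pi]
      intro i
      have hφd : HasFDerivAt φ
          (ContinuousLinearMap.smulRight (1 : ℂ →L[ℂ] ℂ) (deriv φ (z i))) (z i) :=
        ((hdiff.differentiableAt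
          ((Metric.isOpen_ball).mem_nhds (hball z hz i))).hasDerivAt).hasFDerivAt
      have hproj : HasFDerivAt (fun z : EuclideanSpace ℂ (Fin m) => z i)
          (PiLp.proj (𝕜 := ℂ) 2 (fun _ : Fin m => ℂ) i) z := by
        exact (PiLp.proj (𝕜 := ℂ) 2 (fun _ : Fin m => ℂ) i).hasFDerivAt
      exact hφd.comp z hproj
    exact ((e.symm.hasFDerivAt).comp z hpi : _)
  have hCS : ContinuousSMul ℂ (PiLp 2 fun _ : Fin m => EuclideanSpace ℂ (Fin 2)) := inferInstance
  refine ⟨?_, ?_, ?_, ?_, ?_, ?_⟩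
  · exact fun z hz => ((hfd z hz).differentiableAt).differentiableWithinAt
  · intro z hz
    rw [(hfd z hz).fderiv]
    intro v w hvw
    have h1 : ∀ i, v i • deriv φ (z i) = w i • deriv φ (z i) := by
      intro i
      have := congrArg (fun x : PiLp 2 (fun _ : Fin m => EuclideanSpace ℂ (Fin 2)) => x i) hvw
      simpa [L, e, ContinuousLinearMap.pi_apply] using this
    ext i
    have h2 := h1 i
    have h3 : (v i - w i) • deriv φ (z i) = 0 := by
      rw [sub_smul, h2, sub_self]
    rcases smul_eq_zero.mp h3 with h | h
    · exact sub_eq_zero.mp h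
    · exact absurd h (himm _ (hball z hz i))
  · exact fun z hz i => himg _ (hball z hz i)
  · intro K hKQ hK
    have hKiC : ∀ i : Fin m, IsCompact ((fun w : PiLp 2 (fun _ : Fin m => EuclideanSpace ℂ (Fin 2)) => w i) '' K) :=
      fun i => hK.image (piLp2_lip_eval i).continuous
    have hKiB : ∀ i : Fin m, ((fun w : PiLp 2 (fun _ : Fin m => EuclideanSpace ℂ (Fin 2)) => w i) '' K)
        ⊆ ball (0 : EuclideanSpace ℂ (Fin 2)) 1 := by
      rintro i _ ⟨w, hw, rfl⟩
      exact hKQ hw i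
    set Li : Fin m → Set ℂ := fun i =>
      {ζ ∈ ball (0:ℂ) 1 | φ ζ ∈ (fun w : PiLp 2 (fun _ : Fin m => EuclideanSpace ℂ (Fin 2)) => w i) '' K}
      with hLi
    have hLiC : ∀ i, IsCompact (Li i) := fun i => hproper _ (hKiB i) (hKiC i)
    set T : Set (EuclideanSpace ℂ (Fin m)) := {z | ∀ i, z i ∈ Li i} with hT
    have hTC : IsCompact T := piLp2_isCompact_pi Li hLiC
    have hTP : T ⊆ P := fun z hz i => mem_ball_zero_iff.mp (hz i).1
    have hST : {z ∈ P | Φ z ∈ K} ⊆ T := by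
      rintro z ⟨hzP, hzK⟩ i
      exact ⟨hball z hzP i, ⟨Φ z, hzK, rfl⟩⟩
    have hclosed : IsClosed {z ∈ P | Φ z ∈ K} := by
      apply isClosed_of_closure_subset
      intro z hzc
      have hzT : z ∈ T := by
        have := closure_mono hST hzc
        rwa [hTC.isClosed.closure_eq] at this
      have hzP : z ∈ P := hTP hzT
      have hcont : ContinuousAt Φ z := (hfd z hzP).differentiableAt.continuousAt
      have h1 : Φ z ∈ closure (Φ '' {z ∈ P | Φ z ∈ K}) := mem_closure_image hcont hzc
      have h2 : Φ '' {z ∈ P | Φ z ∈ K} ⊆ K := by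
        rintro _ ⟨w, ⟨_, hwK⟩, rfl⟩
        exact hwK
      have h3 : Φ z ∈ K := by
        have := closure_mono h2 h1
        rwa [hK.isClosed.closure_eq] at this
      exact ⟨hzP, h3⟩
    exact hTC.of_isClosed_subset hclosed hST
  · rintro γ ⟨hγc, hγP, hγdiv⟩
    rw [← top_le_iff]
    have key : ∀ i : Fin m,
        eVariationOn (fun t => φ (γ t i)) (Ico 0 1) ≤
          eVariationOn (fun t => Φ (γ t)) (Ico 0 1) := by
      intro i
      exact piLp2_evar_coord_le (fun t => Φ (γ t)) (Ico 0 1) i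
    by_cases hA : ∃ i, DivergentPathIn (ball (0:ℂ) 1) (fun t => γ t i)
    · obtain ⟨i, hi⟩ := hA
      calc (⊤:ℝ≥0∞) = eVariationOn (fun t => φ (γ t i)) (Ico 0 1) := (hcomplete _ hi).symm
        _ ≤ _ := key i
    · push_neg at hA
      have hret : ∀ i : Fin m, ∃ K : Set ℂ, K ⊆ ball (0:ℂ) 1 ∧ IsCompact K ∧
          ∀ t₀ ∈ Ico (0:ℝ) 1, ∃ t ∈ Ico t₀ 1, γ t i ∈ K := by
        intro i
        have hni := hA i
        rw [DivergentPathIn, not_and, not_and] at hni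
        have hc : ContinuousOn (fun t => γ t i) (Ico (0:ℝ) 1) :=
          (piLp2_lip_eval i).continuous.comp_continuousOn hγc
        have hv : ∀ t ∈ Ico (0:ℝ) 1, γ t i ∈ ball (0:ℂ) 1 := fun t ht => hball _ (hγP t ht) i
        have hni2 := hni hc hv
        push_neg at hni2
        obtain ⟨K, hK1, hK2, hK3⟩ := hni2
        refine ⟨K, hK1, hK2, fun t₀ ht₀ => ?_⟩
        obtain ⟨t, ht, htK⟩ := hK3 t₀ ht₀
        exact ⟨t, ht, htK⟩
      choose Kc hKc1 hKc2 hKc3 using hret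
      have hci : ∀ i, ∃ cc : ℝ, cc < 1 ∧ ∀ ζ ∈ Kc i, ‖φ ζ‖ ≤ cc := by
        intro i
        have hne : (Kc i).Nonempty := by
          obtain ⟨t, _, htK⟩ := hKc3 i 0 ⟨le_refl 0, zero_lt_one⟩
          exact ⟨_, htK⟩
        have hcont : ContinuousOn (fun ζ => ‖φ ζ‖) (Kc i) :=
          (hdiff.continuousOn.mono (hKc1 i)).norm
        obtain ⟨ζ₀, hζ₀, hmax⟩ := (hKc2 i).exists_isMaxOn hne hcont
        exact ⟨‖φ ζ₀‖, mem_ball_zero_iff.mp (himg _ (hKc1 i hζ₀)), fun ζ hζ => hmax hζ⟩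
      choose ci hci1 hci2 using hci
      haveI hFinNe : Nonempty (Fin m) := Fin.pos_iff_nonempty.mp hm
      obtain ⟨c, hc1, hc2⟩ : ∃ c : ℝ, c < 1 ∧ ∀ i, ci i ≤ c :=
        ⟨Finset.univ.sup' Finset.univ_nonempty ci,
          (Finset.sup'_lt_iff _).mpr fun i _ => hci1 i,
          fun i => Finset.le_sup' ci (Finset.mem_univ i)⟩
      have hc0 : 0 ≤ c := by
        obtain ⟨t, _, htK⟩ := hKc3 (Classical.arbitrary (Fin m)) 0 ⟨le_refl 0, zero_lt_one⟩
        exact le_trans (le_trans (norm_nonneg _) (hci2 _ _ htK)) (hc2 _)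
      set ε : ℝ := (1 - c)/2 with hε
      have hε0 : 0 < ε := by rw [hε]; linarith
      have hεc : c < 1 - ε := by rw [hε]; linarith
      have hε1 : 1 - ε < 1 := by linarith
      set LL : Set ℂ :=
        {ζ ∈ ball (0:ℂ) 1 | φ ζ ∈ closedBall (0 : EuclideanSpace ℂ (Fin 2)) (1-ε)} with hLLdef
      have hLLC : IsCompact LL :=
        hproper _ (closedBall_subset_ball hε1) (isCompact_closedBall _ _)
      set T : Set (EuclideanSpace ℂ (Fin m)) := {z | ∀ i, z i ∈ LL} with hT
      have hTC : IsCompact T := piLp2_isCompact_pi (fun _ => LL) (fun _ => hLLC)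
      have hTP : T ⊆ P := fun z hz i => mem_ball_zero_iff.mp (hz i).1
      obtain ⟨t₀', ht₀', hdivT⟩ := hγdiv T hTP hTC
      have Hhi : ∃ i, ∀ t₀ ∈ Ico (0:ℝ) 1, ∃ t ∈ Ico t₀ 1, 1 - ε < ‖φ (γ t i)‖ := by
        by_contra hno
        push_neg at hno
        choose s hs1 hs2 using hno
        set t₁ : ℝ := max t₀' (Finset.univ.sup' Finset.univ_nonempty s) with ht₁
        have ht₁m : t₁ ∈ Ico (0:ℝ) 1 := by
          constructor
          · exact le_trans ht₀'.1 (le_max_left _ _)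
          · apply max_lt ht₀'.2
            exact (Finset.sup'_lt_iff _).mpr fun i _ => (hs1 i).2
        have hnotT : γ t₁ ∉ T := hdivT t₁ ⟨le_max_left _ _, ht₁m.2⟩
        apply hnotT
        intro i
        refine ⟨hball _ (hγP t₁ ht₁m) i, ?_⟩
        rw [mem_closedBall_zero_iff]
        refine hs2 i t₁ ⟨?_, ht₁m.2⟩
        exact le_trans (Finset.le_sup' s (Finset.mem_univ i)) (le_max_right _ _)
      obtain ⟨i, Hhi⟩ := Hhi
      have Hlo : ∀ t₀ ∈ Ico (0:ℝ) 1, ∃ t ∈ Ico t₀ 1, ‖φ (γ t i)‖ ≤ c := by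
        intro t₀ ht₀
        obtain ⟨t, ht, htK⟩ := hKc3 i t₀ ht₀
        exact ⟨t, ht, le_trans (hci2 i _ htK) (hc2 i)⟩
      have Hhi' : ∀ t₀ : ℝ, ∃ t : ℝ,
          t₀ ∈ Ico (0:ℝ) 1 → (t ∈ Ico t₀ 1 ∧ 1 - ε < ‖φ (γ t i)‖) := by
        intro t₀
        by_cases h : t₀ ∈ Ico (0:ℝ) 1
        · obtain ⟨t, ht1, ht2⟩ := Hhi t₀ h
          exact ⟨t, fun _ => ⟨ht1, ht2⟩⟩
        · exact ⟨0, fun hcon => absurd hcon h⟩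
      have Hlo' : ∀ t₀ : ℝ, ∃ t : ℝ,
          t₀ ∈ Ico (0:ℝ) 1 → (t ∈ Ico t₀ 1 ∧ ‖φ (γ t i)‖ ≤ c) := by
        intro t₀
        by_cases h : t₀ ∈ Ico (0:ℝ) 1
        · obtain ⟨t, ht1, ht2⟩ := Hlo t₀ h
          exact ⟨t, fun _ => ⟨ht1, ht2⟩⟩
        · exact ⟨0, fun hcon => absurd hcon h⟩
      choose Fhi hFhi using Hhi'
      choose Flo hFlo using Hlo'
      set u : ℕ → ℝ :=
        fun n => Nat.rec (Fhi 0) (fun k t => if k % 2 = 0 then Flo t else Fhi t) n with hu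
      have hu0 : u 0 = Fhi 0 := rfl
      have huS : ∀ k, u (k+1) = if k % 2 = 0 then Flo (u k) else Fhi (u k) := fun k => rfl
      have h00 : (0:ℝ) ∈ Ico (0:ℝ) 1 := ⟨le_refl _, zero_lt_one⟩
      have hu_inv : ∀ k, u k ∈ Ico (0:ℝ) 1 ∧
          (k % 2 = 0 → 1 - ε < ‖φ (γ (u k) i)‖) ∧
          (k % 2 = 1 → ‖φ (γ (u k) i)‖ ≤ c) := by
        intro k
        induction k with
        | zero =>
          obtain ⟨hm1, hm2⟩ := hFhi 0 h00
          exact ⟨⟨le_trans h00.1 hm1.1, hm1.2⟩, fun _ => by rwa [hu0], fun h => by omega⟩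
        | succ k ih =>
          rcases Nat.even_or_odd k with hk | hk
          · have hk2 : k % 2 = 0 := Nat.even_iff.mp hk
            have heq : u (k+1) = Flo (u k) := by rw [huS, hk2]; simp
            obtain ⟨hm1, hm2⟩ := hFlo (u k) ih.1
            rw [heq]
            exact ⟨⟨le_trans ih.1.1 hm1.1, hm1.2⟩, fun h => by omega, fun _ => hm2⟩
          · have hk2 : k % 2 = 1 := Nat.odd_iff.mp hk
            have heq : u (k+1) = Fhi (u k) := by rw [huS, hk2]; simp
            obtain ⟨hm1, hm2⟩ := hFhi (u k) ih.1
            rw [heq]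
            exact ⟨⟨le_trans ih.1.1 hm1.1, hm1.2⟩, fun _ => hm2, fun h => by omega⟩
      have hu_mono : Monotone u := by
        apply monotone_nat_of_le_succ
        intro k
        rcases Nat.even_or_odd k with hk | hk
        · have hk2 : k % 2 = 0 := Nat.even_iff.mp hk
          have heq : u (k+1) = Flo (u k) := by rw [huS, hk2]; simp
          rw [heq]
          exact (hFlo (u k) (hu_inv k).1).1.1
        · have hk2 : k % 2 = 1 := Nat.odd_iff.mp hk
          have heq : u (k+1) = Fhi (u k) := by rw [huS, hk2]; simp
          rw [heq]
          exact (hFhi (u k) (hu_inv k).1).1.1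
      set δ : ℝ := (1 - ε) - c with hδdef
      have hδ0 : 0 < δ := by rw [hδdef]; linarith
      have hstep : ∀ k, ENNReal.ofReal δ ≤
          edist (φ (γ (u (k+1)) i)) (φ (γ (u k) i)) := by
        intro k
        have hd : δ ≤ dist (φ (γ (u (k+1)) i)) (φ (γ (u k) i)) := by
          rcases Nat.even_or_odd k with hk | hk
          · have hk2 : k % 2 = 0 := Nat.even_iff.mp hk
            have hk3 : (k+1) % 2 = 1 := by omega
            have hhi := (hu_inv k).2.1 hk2
            have hlo := (hu_inv (k+1)).2.2 hk3
            rw [dist_eq_norm]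
            calc δ ≤ ‖φ (γ (u k) i)‖ - ‖φ (γ (u (k+1)) i)‖ := by rw [hδdef]; linarith
              _ ≤ ‖φ (γ (u k) i) - φ (γ (u (k+1)) i)‖ := norm_sub_norm_le _ _
              _ = ‖φ (γ (u (k+1)) i) - φ (γ (u k) i)‖ := by rw [norm_sub_rev]
          · have hk2 : k % 2 = 1 := Nat.odd_iff.mp hk
            have hk3 : (k+1) % 2 = 0 := by omega
            have hhi := (hu_inv (k+1)).2.1 hk3
            have hlo := (hu_inv k).2.2 hk2
            rw [dist_eq_norm]
            calc δ ≤ ‖φ (γ (u (k+1)) i)‖ - ‖φ (γ (u k) i)‖ := by rw [hδdef]; linarith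
              _ ≤ ‖φ (γ (u (k+1)) i) - φ (γ (u k) i)‖ := norm_sub_norm_le _ _
        rw [edist_dist]
        exact ENNReal.ofReal_le_ofReal hd
      have hsum : ∀ n : ℕ, (n : ℝ≥0∞) * ENNReal.ofReal δ ≤
          eVariationOn (fun t => φ (γ t i)) (Ico 0 1) := by
        intro n
        have h1 := eVariationOn.sum_le (f := fun t => φ (γ t i)) (n := n) hu_mono
          (fun k => (hu_inv k).1)
        refine le_trans ?_ h1
        calc (n : ℝ≥0∞) * ENNReal.ofReal δ
            = ∑ _k ∈ Finset.range n, ENNReal.ofReal δ := by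
              rw [Finset.sum_const, Finset.card_range, nsmul_eq_mul]
          _ ≤ ∑ k ∈ Finset.range n, edist (φ (γ (u (k+1)) i)) (φ (γ (u k) i)) :=
              Finset.sum_le_sum fun k _ => hstep k
      have hft : eVariationOn (fun t => φ (γ t i)) (Ico (0:ℝ) 1) = ⊤ := by
        by_contra hne
        have hδne0 : ENNReal.ofReal δ ≠ 0 := (ENNReal.ofReal_pos.mpr hδ0).ne'
        have hdivne : eVariationOn (fun t => φ (γ t i)) (Ico (0:ℝ) 1) / ENNReal.ofReal δ ≠ ⊤ :=
          (ENNReal.div_lt_top hne hδne0).ne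
        obtain ⟨n, hn⟩ := ENNReal.exists_nat_gt hdivne
        have h2 : eVariationOn (fun t => φ (γ t i)) (Ico (0:ℝ) 1) <
            (n : ℝ≥0∞) * ENNReal.ofReal δ := by
          rw [← ENNReal.div_lt_iff (Or.inl hδne0) (Or.inl ENNReal.ofReal_ne_top)]
          exact hn
        exact absurd (hsum n) (not_le.mpr h2)
      calc (⊤:ℝ≥0∞) = eVariationOn (fun t => φ (γ t i)) (Ico 0 1) := hft.symm
        _ ≤ _ := key i
  · intro hinj z hz z' hz' h
    ext i
    exact hinj (hball z hz i) (hball z' hz' i) (congrArg (fun w : PiLp 2 (fun _ : Fin m => EuclideanSpace ℂ (Fin 2)) => w i) h)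
end
end

section
/- Let n ≥ 1 and let C and T be disjoint compact convex subsets of ℂⁿ. If A ⊆ C is a compact polynomially convex set, then A ∪ T is polynomially convex. (Consequence of Kallin's lemma and the Oka–Weil theorem used in the constructions with labyrinths.) -/
open Set Metric

noncomputable section

/-- The polynomially convex hull of a set `A ⊆ ℂⁿ`: the set of points `z` such that
`‖p z‖ ≤ sup_{w ∈ A} ‖p w‖` for every holomorphic polynomial `p` in `n` variables. -/
def polyHull {n : ℕ} (A : Set (EuclideanSpace ℂ (Fin n))) : Set (EuclideanSpace ℂ (Fin n)) :=
  {z | ∀ p : MvPolynomial (Fin n) ℂ, ∀ C : ℝ,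
    (∀ w ∈ A, ‖MvPolynomial.eval (fun i => w i) p‖ ≤ C) →
    ‖MvPolynomial.eval (fun i => z i) p‖ ≤ C}

/-- A compact set is polynomially convex if it equals its polynomially convex hull. -/
def IsPolynomiallyConvex {n : ℕ} (A : Set (EuclideanSpace ℂ (Fin n))) : Prop :=
  polyHull A = A

set_option maxHeartbeats 1000000

namespace KallinAux

open Polynomial

/-- `f` is uniformly approximable by polynomials on `K`. -/
def Approx (K : Set ℂ) (f : ℂ → ℂ) : Prop :=
  ∀ ε : ℝ, 0 < ε → ∃ q : Polynomial ℂ, ∀ w ∈ K, ‖f w - q.eval w‖ ≤ ε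

lemma approx_congr {K : Set ℂ} {f g : ℂ → ℂ} (h : ∀ w ∈ K, f w = g w)
    (hf : Approx K f) : Approx K g := by
  intro ε hε
  obtain ⟨q, hq⟩ := hf ε hε
  exact ⟨q, fun w hw => (h w hw) ▸ hq w hw⟩

lemma approx_polyEval (K : Set ℂ) (q : Polynomial ℂ) : Approx K (fun w => q.eval w) :=
  fun ε hε => ⟨q, fun w _ => by simp [hε.le]⟩

lemma approx_const (K : Set ℂ) (c : ℂ) : Approx K (fun _ => c) := by
  have := approx_polyEval K (Polynomial.C c)
  simpa using this

lemma Approx.bound {K : Set ℂ} {f : ℂ → ℂ} (hK : IsCompact K) (h : Approx K f) :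
    ∃ M : ℝ, 0 ≤ M ∧ ∀ w ∈ K, ‖f w‖ ≤ M := by
  obtain ⟨q, hq⟩ := h 1 one_pos
  obtain ⟨M, hM⟩ := hK.exists_bound_of_continuousOn (Polynomial.continuous q).continuousOn
  refine ⟨|M| + 1, by positivity, fun w hw => ?_⟩
  have hfw : ‖f w‖ ≤ ‖f w - q.eval w‖ + ‖q.eval w‖ := by
    have := norm_add_le (f w - q.eval w) (q.eval w); simpa using this
  calc ‖f w‖ ≤ ‖f w - q.eval w‖ + ‖q.eval w‖ := hfw
  _ ≤ 1 + |M| := add_le_add (hq w hw) ((hM w hw).trans (le_abs_self M))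
  _ = |M| + 1 := by ring

lemma Approx.mul {K : Set ℂ} {f g : ℂ → ℂ} (hK : IsCompact K)
    (hf : Approx K f) (hg : Approx K g) : Approx K (fun w => f w * g w) := by
  obtain ⟨Mf, hMf0, hMf⟩ := hf.bound hK
  obtain ⟨Mg, hMg0, hMg⟩ := hg.bound hK
  intro ε hε
  obtain ⟨qg, hqg⟩ := hg (ε / (2 * (Mf + 1))) (by positivity)
  obtain ⟨qf, hqf⟩ := hf (ε / (2 * (Mg + 1 + ε))) (by positivity)
  refine ⟨qf * qg, fun w hw => ?_⟩
  have h1 : ‖f w * g w - qf.eval w * qg.eval w‖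
      ≤ ‖f w‖ * ‖g w - qg.eval w‖ + ‖qg.eval w‖ * ‖f w - qf.eval w‖ := by
    have : f w * g w - qf.eval w * qg.eval w
        = f w * (g w - qg.eval w) + qg.eval w * (f w - qf.eval w) := by ring
    rw [this]
    exact (norm_add_le _ _).trans (by rw [norm_mul, norm_mul])
  have hqgw : ‖qg.eval w‖ ≤ Mg + 1 + ε := by
    have := hqg w hw
    have h2 : ‖qg.eval w‖ ≤ ‖g w‖ + ‖g w - qg.eval w‖ := by
      have := norm_sub_norm_le (g w) (qg.eval w)
      have h3 : ‖qg.eval w‖ ≤ ‖qg.eval w - g w‖ + ‖g w‖ := by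
        have := norm_add_le (qg.eval w - g w) (g w); simpa using this
      calc ‖qg.eval w‖ ≤ ‖qg.eval w - g w‖ + ‖g w‖ := h3
      _ = ‖g w - qg.eval w‖ + ‖g w‖ := by rw [norm_sub_rev]
      _ = ‖g w‖ + ‖g w - qg.eval w‖ := by ring
    have hεle : ε / (2 * (Mf + 1)) ≤ ε := by
      rw [div_le_iff₀ (by positivity)]
      nlinarith
    calc ‖qg.eval w‖ ≤ ‖g w‖ + ε / (2 * (Mf+1)) := h2.trans (by linarith [hqg w hw])
    _ ≤ Mg + ε := by linarith [hMg w hw]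
    _ ≤ Mg + 1 + ε := by linarith
  show ‖f w * g w - (qf*qg).eval w‖ ≤ ε
  rw [Polynomial.eval_mul]
  calc ‖f w * g w - qf.eval w * qg.eval w‖
      ≤ ‖f w‖ * ‖g w - qg.eval w‖ + ‖qg.eval w‖ * ‖f w - qf.eval w‖ := h1
  _ ≤ Mf * (ε / (2 * (Mf + 1))) + (Mg + 1 + ε) * (ε / (2 * (Mg + 1 + ε))) := by
      have := hMf w hw; have := hqg w hw; have := hqf w hw
      have hq0 : (0:ℝ) ≤ ‖f w - qf.eval w‖ := norm_nonneg _
      have hg0 : (0:ℝ) ≤ ‖g w - qg.eval w‖ := norm_nonneg _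
      nlinarith [norm_nonneg (f w), norm_nonneg (qg.eval w)]
  _ ≤ ε / 2 + ε / 2 := by
      have h4 : Mf * (ε / (2 * (Mf + 1))) ≤ ε / 2 := by
        rw [mul_div_assoc', div_le_div_iff₀ (by positivity) (by norm_num)]
        nlinarith
      have h5 : (Mg + 1 + ε) * (ε / (2 * (Mg + 1 + ε))) ≤ ε / 2 := by
        rw [mul_div_assoc', div_le_div_iff₀ (by positivity) (by norm_num)]
        nlinarith
      linarith
  _ = ε := by ring

lemma Approx.add {K : Set ℂ} {f g : ℂ → ℂ}
    (hf : Approx K f) (hg : Approx K g) : Approx K (fun w => f w + g w) := by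
  intro ε hε
  obtain ⟨qf, hqf⟩ := hf (ε/2) (by positivity)
  obtain ⟨qg, hqg⟩ := hg (ε/2) (by positivity)
  refine ⟨qf + qg, fun w hw => ?_⟩
  have : f w + g w - (qf + qg).eval w = (f w - qf.eval w) + (g w - qg.eval w) := by
    simp; ring
  rw [this]
  calc ‖_ + _‖ ≤ ‖f w - qf.eval w‖ + ‖g w - qg.eval w‖ := norm_add_le _ _
  _ ≤ ε/2 + ε/2 := add_le_add (hqf w hw) (hqg w hw)
  _ = ε := by ring


lemma approx_def {K : Set ℂ} {f : ℂ → ℂ} : Approx K f ↔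
  ∀ ε : ℝ, 0 < ε → ∃ q : Polynomial ℂ, ∀ w ∈ K, ‖f w - q.eval w‖ ≤ ε := Iff.rfl

lemma Approx.pow {K : Set ℂ} {f : ℂ → ℂ} (hK : IsCompact K) (hf : Approx K f) :
    ∀ k : ℕ, Approx K (fun w => (f w) ^ k)
  | 0 => approx_congr (by simp) (approx_const K 1)
  | (k+1) => approx_congr (f := fun w => (f w)^k * f w) (fun w _ => by ring)
      ((Approx.pow hK hf k).mul hK hf)

lemma approx_finsetSum {K : Set ℂ} {ι : Type*} (s : Finset ι) (f : ι → ℂ → ℂ)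
    (h : ∀ i ∈ s, Approx K (f i)) : Approx K (fun w => ∑ i ∈ s, f i w) := by
  classical
  induction s using Finset.induction_on with
  | empty => exact approx_congr (by simp) (approx_const K 0)
  | insert a s' hnot ih =>
    refine approx_congr (f := fun w => f a w + ∑ i ∈ s', f i w)
      (fun w _ => by rw [Finset.sum_insert hnot]) ?_
    exact (h a (Finset.mem_insert_self a s')).add (ih fun i hi => h i (Finset.mem_insert_of_mem hi))

/-- Approximability of `(w - a)⁻¹` for `a` far away: geometric series. -/
lemma approx_inv_far {K : Set ℂ} {R : ℝ} (hR : ∀ w ∈ K, ‖w‖ ≤ R) (hR0 : 0 ≤ R)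
    {a : ℂ} (ha : 2 * R + 1 ≤ ‖a‖) : Approx K (fun w => (w - a)⁻¹) := by
  rw [approx_def]
  intro ε hε
  have ha0 : a ≠ 0 := by
    intro h; rw [h] at ha; simp at ha; linarith
  obtain ⟨m, hm⟩ := exists_pow_lt_of_lt_one hε (by norm_num : (1:ℝ)/2 < 1)
  refine ⟨-∑ k ∈ Finset.range m, Polynomial.C ((a⁻¹)^(k+1)) * Polynomial.X ^ k,
    fun w hw => ?_⟩
  have hwa : ‖w - a‖ ≥ R + 1 := by
    have h1 : ‖a‖ - ‖w‖ ≤ ‖w - a‖ := by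
      have := norm_sub_norm_le a w
      rw [norm_sub_rev]; linarith
    have := hR w hw; linarith
  have hwa0 : w - a ≠ 0 := by
    intro h; rw [h] at hwa; simp at hwa; linarith
  -- identity : (w-a)⁻¹ + ∑ w^k/a^(k+1) = (w/a)^m * (w-a)⁻¹
  have key : ∀ M : ℕ, (w - a)⁻¹ + ∑ k ∈ Finset.range M, (a⁻¹)^(k+1) * w^k
      = (w/a)^M * (w-a)⁻¹ := by
    intro M
    induction M with
    | zero => simp
    | succ M ih =>
      rw [Finset.sum_range_succ, ← add_assoc, ih]
      rw [div_pow, div_pow, inv_pow]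
      field_simp
      ring
  have heval : Polynomial.eval w (-∑ k ∈ Finset.range m, Polynomial.C ((a⁻¹)^(k+1)) * Polynomial.X ^ k)
      = -∑ k ∈ Finset.range m, (a⁻¹)^(k+1) * w^k := by
    simp [Polynomial.eval_finset_sum]
  rw [heval, sub_neg_eq_add, key m]
  rw [norm_mul, norm_pow, norm_inv, norm_div]
  have h2 : ‖w‖/‖a‖ ≤ 1/2 := by
    rw [div_le_div_iff₀ (by linarith) (by norm_num)]
    have := hR w hw; linarith
  have h3 : ‖w - a‖⁻¹ ≤ 1 := by
    rw [inv_le_one_iff₀]; right; linarith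
  calc (‖w‖/‖a‖)^m * ‖w-a‖⁻¹ ≤ (1/2)^m * 1 :=
        mul_le_mul (pow_le_pow_left₀ (div_nonneg (norm_nonneg _) (norm_nonneg _)) h2 m) h3
          (inv_nonneg.mpr (norm_nonneg _)) (by positivity)
  _ ≤ ε := by rw [mul_one]; exact hm.le

/-- Pole pushing step. -/
lemma approx_inv_step {K : Set ℂ} (hK : IsCompact K) {δ : ℝ} (hδ : 0 < δ) {a b : ℂ}
    (hab : ‖a - b‖ ≤ δ/4) (hd : ∀ w ∈ K, δ ≤ ‖w - a‖)
    (hb : Approx K (fun w => (w - b)⁻¹)) : Approx K (fun w => (w - a)⁻¹) := by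
  have hdb : ∀ w ∈ K, 3*δ/4 ≤ ‖w - b‖ := by
    intro w hw
    have h1 : ‖w - a‖ - ‖a - b‖ ≤ ‖w - b‖ := by
      have := norm_sub_le (w - b) (a - b)
      have h2 : (w - b) - (a - b) = w - a := by ring
      rw [h2] at this; linarith [this]
    have := hd w hw; linarith
  rw [approx_def]
  intro ε hε
  obtain ⟨m, hm⟩ := exists_pow_lt_of_lt_one (mul_pos hε (by positivity : (0:ℝ) < δ/2))
    (by norm_num : (1:ℝ)/3 < 1)
  -- the approximating function g_m
  have happrox : Approx K (fun w => ∑ k ∈ Finset.range m, (a-b)^k * ((w-b)⁻¹)^(k+1)) := by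
    refine approx_finsetSum _ _ (fun k _ => ?_)
    refine approx_congr (f := fun w => (a-b)^k * ((w-b)⁻¹)^(k+1)) (fun w _ => rfl) ?_
    exact (approx_const K ((a-b)^k)).mul hK (hb.pow hK (k+1))
  rw [approx_def] at happrox
  obtain ⟨q, hq⟩ := happrox (ε/2) (by positivity)
  refine ⟨q, fun w hw => ?_⟩
  have hwa0 : w - a ≠ 0 := by
    intro h; have := hd w hw; rw [h] at this; simp at this; linarith
  have hwb0 : w - b ≠ 0 := by
    intro h; have := hdb w hw; rw [h] at this; simp at this; linarith
  have key : ∀ M : ℕ, (w - a)⁻¹ - ∑ k ∈ Finset.range M, (a-b)^k * ((w-b)⁻¹)^(k+1)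
      = ((a-b)/(w-b))^M * (w-a)⁻¹ := by
    intro M
    induction M with
    | zero => simp
    | succ M ih =>
      rw [Finset.sum_range_succ, ← sub_sub, ih]
      rw [div_pow, div_pow, inv_pow]
      field_simp
      ring
  have htail : ‖(w-a)⁻¹ - ∑ k ∈ Finset.range m, (a-b)^k * ((w-b)⁻¹)^(k+1)‖ ≤ ε/2 := by
    rw [key m, norm_mul, norm_pow, norm_div, norm_inv]
    have h2 : ‖a-b‖/‖w-b‖ ≤ 1/3 := by
      rw [div_le_div_iff₀ (by linarith [hdb w hw]) (by norm_num)]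
      have := hdb w hw; linarith
    have h3 : ‖w-a‖⁻¹ ≤ δ⁻¹ := by
      rw [inv_le_inv₀ (by linarith [hd w hw]) hδ]
      exact hd w hw
    calc (‖a-b‖/‖w-b‖)^m * ‖w-a‖⁻¹ ≤ (1/3)^m * δ⁻¹ :=
          mul_le_mul (pow_le_pow_left₀ (div_nonneg (norm_nonneg _) (norm_nonneg _)) h2 m) h3
            (inv_nonneg.mpr (norm_nonneg _)) (by positivity)
    _ ≤ (ε * (δ/2)) * δ⁻¹ := mul_le_mul_of_nonneg_right hm.le (inv_nonneg.mpr hδ.le)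
    _ = ε/2 * (δ * δ⁻¹) := by ring
    _ = ε/2 := by rw [mul_inv_cancel₀ (ne_of_gt hδ), mul_one]
  calc ‖(w-a)⁻¹ - q.eval w‖
      ≤ ‖(w-a)⁻¹ - ∑ k ∈ Finset.range m, (a-b)^k * ((w-b)⁻¹)^(k+1)‖
        + ‖(∑ k ∈ Finset.range m, (a-b)^k * ((w-b)⁻¹)^(k+1)) - q.eval w‖ := by
        have := norm_add_le ((w-a)⁻¹ - ∑ k ∈ Finset.range m, (a-b)^k * ((w-b)⁻¹)^(k+1))
          ((∑ k ∈ Finset.range m, (a-b)^k * ((w-b)⁻¹)^(k+1)) - q.eval w)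
        simpa using this
  _ ≤ ε/2 + ε/2 := add_le_add htail (hq w hw)
  _ = ε := by ring


/-- If `K` avoids the vertical strip of half-width `δ` around the vertical line through `a`,
then `(w - a)⁻¹` is approximable by polynomials on `K`. -/
lemma approx_inv_line {K : Set ℂ} (hK : IsCompact K) {R : ℝ} (hR : ∀ w ∈ K, ‖w‖ ≤ R)
    (hR0 : 0 ≤ R) {δ : ℝ} (hδ : 0 < δ) {a : ℂ}
    (ha : ∀ w ∈ K, δ ≤ |w.re - a.re|) : Approx K (fun w => (w - a)⁻¹) := by
  -- the poles along the vertical line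
  set P : ℕ → ℂ := fun j => a + ((j : ℝ) * (δ/4)) * Complex.I with hP
  have hre : ∀ j, (P j).re = a.re := by intro j; simp [hP]
  have hdist : ∀ j, ∀ w ∈ K, δ ≤ ‖w - P j‖ := by
    intro j w hw
    calc δ ≤ |w.re - a.re| := ha w hw
    _ = |(w - P j).re| := by rw [Complex.sub_re, hre]
    _ ≤ ‖w - P j‖ := Complex.abs_re_le_norm _
  obtain ⟨m, hm⟩ := exists_nat_ge ((2*R + 1 + ‖a‖) / (δ/4))
  have hfar : Approx K (fun w => (w - P m)⁻¹) := by
    refine approx_inv_far hR hR0 ?_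
    have h1 : (2*R + 1 + ‖a‖) ≤ (m : ℝ) * (δ/4) := by
      rw [div_le_iff₀ (by positivity)] at hm
      linarith
    have h2 : ‖P m‖ ≥ ‖((m:ℝ) * (δ/4)) * Complex.I‖ - ‖a‖ := by
      have := norm_add_le a (((m:ℝ) * (δ/4)) * Complex.I)
      have h3 : ‖(P m : ℂ)‖ + ‖a‖ ≥ ‖((m:ℝ) * (δ/4)) * Complex.I‖ := by
        have h4 : ((m:ℝ) * (δ/4)) * Complex.I = P m - a := by rw [hP]; ring
        rw [h4]
        have := norm_sub_le (P m) a
        calc ‖P m - a‖ ≤ ‖P m‖ + ‖a‖ := norm_sub_le _ _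
        _ = _ := rfl
      linarith
    have h5 : ‖((m:ℝ) * (δ/4)) * Complex.I‖ = (m:ℝ) * (δ/4) := by
      rw [norm_mul, Complex.norm_I, mul_one]
      simp [abs_of_nonneg (by positivity : (0:ℝ) ≤ (m:ℝ) * (δ/4))]
      left; exact hδ.le
    linarith [h2, h5.symm ▸ h1]
  have hstep : ∀ j : ℕ, Approx K (fun w => (w - P (j+1))⁻¹) → Approx K (fun w => (w - P j)⁻¹) := by
    intro j h
    refine approx_inv_step hK hδ ?_ (hdist j) h
    have : P j - P (j+1) = -(δ/4) * Complex.I := by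
      rw [hP]; push_cast; ring
    rw [this, norm_mul, Complex.norm_I, mul_one, norm_neg]
    simp [abs_of_nonneg (by positivity : (0:ℝ) ≤ δ/4)]
    rw [abs_of_nonneg hδ.le]
  have hall : ∀ i : ℕ, Approx K (fun w => (w - P (m - i))⁻¹) := by
    intro i
    induction i with
    | zero => simpa using hfar
    | succ i ih =>
      by_cases h : m ≤ i
      · have : m - (i+1) = m - i := by omega
        rw [this]; exact ih
      · have : m - i = (m - (i+1)) + 1 := by omega
        rw [this] at ih
        exact hstep _ ih
  have := hall m
  have h0 : P (m - m) = a := by simp [hP]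
  rw [h0] at this
  exact this

/-- Approximability of products of inverses of linear factors. -/
lemma approx_multiset_inv_prod {K : Set ℂ} (hK : IsCompact K) (s : Multiset ℂ)
    (h : ∀ ρ ∈ s, Approx K (fun w => (w - ρ)⁻¹)) :
    Approx K (fun w => (s.map (fun ρ => (w - ρ)⁻¹)).prod) := by
  induction s using Multiset.induction_on with
  | empty => exact approx_congr (by simp) (approx_const K 1)
  | cons a s ih =>
    refine approx_congr (f := fun w => (w-a)⁻¹ * (s.map (fun ρ => (w - ρ)⁻¹)).prod)
      (fun w _ => by simp) ?_
    exact (h a (Multiset.mem_cons_self a s)).mul hK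
      (ih fun ρ hρ => h ρ (Multiset.mem_cons_of_mem hρ))


/-- Key separation lemma: a polynomial close to `0` on `K₁` (where `re ≤ 0`) and
close to `1` on `K₂` (where `re ≥ 1`). -/
lemma exists_sep_poly {K₁ K₂ : Set ℂ} (h1 : IsCompact K₁) (h2 : IsCompact K₂)
    {R : ℝ} (hR0 : 0 ≤ R) (hb1 : ∀ w ∈ K₁, ‖w‖ ≤ R) (hb2 : ∀ w ∈ K₂, ‖w‖ ≤ R)
    (hre1 : ∀ w ∈ K₁, w.re ≤ 0) (hre2 : ∀ w ∈ K₂, 1 ≤ w.re)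
    {ε : ℝ} (hε : 0 < ε) :
    ∃ g : Polynomial ℂ, (∀ w ∈ K₁, ‖g.eval w‖ ≤ ε) ∧ (∀ w ∈ K₂, ‖g.eval w - 1‖ ≤ ε) := by
  obtain ⟨c₁, hc₁⟩ : ∃ c : ℂ, c = ((-1/2 : ℝ) : ℂ) := ⟨_, rfl⟩
  obtain ⟨c₂, hc₂⟩ : ∃ c : ℂ, c = ((3/2 : ℝ) : ℂ) := ⟨_, rfl⟩
  obtain ⟨B, hB⟩ : ∃ B : ℝ, B = R + 3/2 := ⟨_, rfl⟩
  have hB32 : (3/2:ℝ) ≤ B := by rw [hB]; linarith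
  have hB2 : (2:ℝ) < B^2 := by nlinarith [hB32, sq_nonneg (B - 3/2)]
  have hBpos : (0:ℝ) < B^2 := by nlinarith [hB32, sq_nonneg (B - 3/2)]
  obtain ⟨κ, hκ⟩ : ∃ k : ℝ, k = 1 - 2/B^2 := ⟨_, rfl⟩
  have hκ0 : 0 < κ := by
    rw [hκ, sub_pos, div_lt_one hBpos]; exact hB2
  have hκ1 : κ < 1 := by
    have : (0:ℝ) < 2/B^2 := div_pos (by norm_num) hBpos
    rw [hκ]; linarith
  obtain ⟨m, hm⟩ := exists_pow_lt_of_lt_one (lt_min (by norm_num : (0:ℝ) < 1/2)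
    (by positivity : (0:ℝ) < ε/4)) hκ1
  obtain ⟨M, hM⟩ : ∃ M : ℕ, M = m + 1 := ⟨_, rfl⟩
  have hκM : κ^M ≤ min (1/2) (ε/4) := by
    calc κ^M = κ^m * κ := by rw [hM, pow_succ]
    _ ≤ κ^m * 1 := by
        have := pow_nonneg hκ0.le m
        nlinarith [hκ1.le]
    _ ≤ min (1/2) (ε/4) := by rw [mul_one]; exact hm.le
  have hκM2 : κ^M ≤ 1/2 := hκM.trans (min_le_left _ _)
  have hκM4 : κ^M ≤ ε/4 := hκM.trans (min_le_right _ _)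
  have hκMpos : 0 < κ^M := pow_pos hκ0 M
  obtain ⟨N, hN⟩ : ∃ N : ℕ, N = 2 * M := ⟨_, rfl⟩
  obtain ⟨P, hPdef⟩ : ∃ P : Polynomial ℂ, P = (X - C c₁)^N + (X - C c₂)^N := ⟨_, rfl⟩
  have hmonic1 : ((X - C c₁)^N).natDegree = N := by
    rw [natDegree_pow, natDegree_X_sub_C, mul_one]
  have hmonic2 : ((X - C c₂)^N).natDegree = N := by
    rw [natDegree_pow, natDegree_X_sub_C, mul_one]
  have hcoeff : P.coeff N = 2 := by
    rw [hPdef, coeff_add]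
    have e1 : ((X - C c₁)^N).coeff N = 1 := by
      have h := ((monic_X_sub_C c₁).pow (n := N)).coeff_natDegree
      rwa [hmonic1] at h
    have e2 : ((X - C c₂)^N).coeff N = 1 := by
      have h := ((monic_X_sub_C c₂).pow (n := N)).coeff_natDegree
      rwa [hmonic2] at h
    rw [e1, e2]; norm_num
  have hdegle : P.natDegree ≤ N := by
    rw [hPdef]
    exact (natDegree_add_le _ _).trans (by rw [hmonic1, hmonic2]; simp)
  have hdeg : P.natDegree = N := by
    refine le_antisymm hdegle (le_natDegree_of_ne_zero ?_)
    rw [hcoeff]; norm_num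
  have hlead : P.leadingCoeff = 2 := by
    rw [Polynomial.leadingCoeff, hdeg, hcoeff]
  have hP0 : P ≠ 0 := by
    intro h
    rw [h] at hlead
    simp at hlead
  have hfact : P = C 2 * (P.roots.map fun ρ => X - C ρ).prod := by
    have h := (IsAlgClosed.splits P).eq_prod_roots
    rwa [hlead] at h
  -- roots lie on the line re = 1/2
  have hroots : ∀ ρ ∈ P.roots, ρ.re = 1/2 := by
    intro ρ hρ
    have hroot : P.eval ρ = 0 := isRoot_of_mem_roots hρ
    rw [hPdef] at hroot
    simp only [eval_add, eval_pow, eval_sub, eval_X, eval_C] at hroot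
    have heq : (ρ - c₁)^N = -((ρ - c₂)^N) := by linear_combination hroot
    have hnorm : ‖ρ - c₁‖^N = ‖ρ - c₂‖^N := by
      rw [← norm_pow, ← norm_pow, heq, norm_neg]
    have hNne : N ≠ 0 := by omega
    have habs : ‖ρ - c₁‖ = ‖ρ - c₂‖ :=
      (pow_left_inj₀ (norm_nonneg _) (norm_nonneg _) hNne).mp hnorm
    have h1 : ‖ρ - c₁‖^2 = ‖ρ - c₂‖^2 := by rw [habs]
    rw [Complex.sq_norm, Complex.sq_norm,
      Complex.normSq_apply, Complex.normSq_apply] at h1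
    simp only [Complex.sub_re, Complex.sub_im, hc₁, hc₂, Complex.ofReal_re,
      Complex.ofReal_im] at h1
    nlinarith [h1]
  -- difference of squared distances to the two centers
  have hsq : ∀ w : ℂ, ‖w - c₂‖^2 - ‖w - c₁‖^2 = -4*w.re + 2 := by
    intro w
    rw [Complex.sq_norm, Complex.sq_norm,
      Complex.normSq_apply, Complex.normSq_apply]
    simp only [Complex.sub_re, Complex.sub_im, hc₁, hc₂, Complex.ofReal_re, Complex.ofReal_im]
    ring
  -- main quantitative estimate
  have key : ∀ x y : ℂ, ‖x‖^2 + 2 ≤ ‖y‖^2 → ‖y‖ ≤ B →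
      ‖x^N‖ ≤ κ^M * ‖y^N‖ ∧ (1 - κ^M) * ‖y^N‖ ≤ ‖x^N + y^N‖ ∧ (0:ℝ) < ‖y^N‖ := by
    intro x y hxy hyB
    have hy2 : (2:ℝ) ≤ ‖y‖^2 := by nlinarith [sq_nonneg ‖x‖]
    have hb2 : ‖y‖^2 ≤ B^2 := by nlinarith [norm_nonneg y, hyB]
    have hx2 : ‖x‖^2 ≤ κ * ‖y‖^2 := by
      have hmul : ‖x‖^2 * B^2 ≤ (κ * ‖y‖^2) * B^2 := by
        have hrw : (κ * ‖y‖^2) * B^2 = (B^2 - 2) * ‖y‖^2 := by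
          rw [hκ]; field_simp
        rw [hrw]
        nlinarith [hxy, hb2]
      exact le_of_mul_le_mul_right hmul hBpos
    have hxN : ‖x^N‖ ≤ κ^M * ‖y^N‖ := by
      rw [norm_pow, norm_pow, hN, pow_mul, pow_mul, ← mul_pow]
      exact pow_le_pow_left₀ (by positivity) hx2 M
    have hyNpos : (0:ℝ) < ‖y^N‖ := by
      rw [norm_pow]
      have : (0:ℝ) < ‖y‖ := by nlinarith [norm_nonneg y]
      positivity
    refine ⟨hxN, ?_, hyNpos⟩
    have h5 : ‖y^N‖ ≤ ‖x^N + y^N‖ + ‖x^N‖ := by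
      have h6 := norm_sub_le (x^N + y^N) (x^N)
      simpa using h6
    linarith [hxN]
  -- bound on K₁ and K₂ for the rational function r
  have hhalf : (0:ℝ) < 1 - κ^M := by linarith
  have hfrac : ∀ Y : ℝ, 0 < Y → κ^M * Y * ((1-κ^M) * Y)⁻¹ ≤ 2 * κ^M := by
    intro Y hY
    have he : κ^M * Y * ((1-κ^M) * Y)⁻¹ = κ^M * (1-κ^M)⁻¹ := by
      rw [mul_inv]
      field_simp
    rw [he]
    have h2inv : (1-κ^M)⁻¹ ≤ 2 := by
      rw [inv_le_comm₀ hhalf (by norm_num)]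
      linarith
    calc κ^M * (1-κ^M)⁻¹ ≤ κ^M * 2 := mul_le_mul_of_nonneg_left h2inv hκMpos.le
    _ = 2 * κ^M := by ring
  have hDbound : ∀ w : ℂ,
      (w ∈ K₁ → P.eval w ≠ 0 ∧ ‖(w - c₁)^N * (P.eval w)⁻¹‖ ≤ 2 * κ^M) ∧
      (w ∈ K₂ → P.eval w ≠ 0 ∧ ‖(w - c₁)^N * (P.eval w)⁻¹ - 1‖ ≤ 2 * κ^M) := by
    intro w
    have hevalP : P.eval w = (w - c₁)^N + (w - c₂)^N := by
      rw [hPdef]; simp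
    constructor
    · intro hw
      have hre := hre1 w hw
      have hxy : ‖w - c₁‖^2 + 2 ≤ ‖w - c₂‖^2 := by
        have := hsq w; nlinarith
      have hyB : ‖w - c₂‖ ≤ B := by
        have h7 := norm_sub_le w c₂
        have h8 : ‖c₂‖ = 3/2 := by
          rw [hc₂, Complex.norm_real]; norm_num
        have := hb1 w hw
        rw [hB]; linarith [h7, h8 ▸ h7]
      obtain ⟨hxN, hD, hyNpos⟩ := key (w - c₁) (w - c₂) hxy hyB
      have hDpos : (0:ℝ) < ‖(w-c₁)^N + (w-c₂)^N‖ := lt_of_lt_of_le (by positivity) hD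
      have hDne : P.eval w ≠ 0 := by
        rw [hevalP]; intro h; rw [h] at hDpos; simp at hDpos
      refine ⟨hDne, ?_⟩
      rw [hevalP, norm_mul, norm_inv]
      have hinv : ‖(w-c₁)^N + (w-c₂)^N‖⁻¹ ≤ ((1-κ^M) * ‖(w-c₂)^N‖)⁻¹ :=
        inv_anti₀ (by positivity) hD
      calc ‖(w-c₁)^N‖ * ‖(w-c₁)^N + (w-c₂)^N‖⁻¹
          ≤ (κ^M * ‖(w-c₂)^N‖) * ((1-κ^M) * ‖(w-c₂)^N‖)⁻¹ := by
            apply mul_le_mul hxN hinv (by positivity) (by positivity)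
      _ ≤ 2 * κ^M := hfrac _ hyNpos
    · intro hw
      have hre := hre2 w hw
      have hxy : ‖w - c₂‖^2 + 2 ≤ ‖w - c₁‖^2 := by
        have := hsq w; nlinarith
      have hyB : ‖w - c₁‖ ≤ B := by
        have h7 := norm_sub_le w c₁
        have h8 : ‖c₁‖ = 1/2 := by
          rw [hc₁, Complex.norm_real]; norm_num
        have := hb2 w hw
        rw [hB]; linarith [h7, h8 ▸ h7]
      obtain ⟨hxN, hD, hyNpos⟩ := key (w - c₂) (w - c₁) hxy hyB
      have hD' : (1 - κ^M) * ‖(w-c₁)^N‖ ≤ ‖(w-c₁)^N + (w-c₂)^N‖ := by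
        rw [add_comm ((w-c₁)^N) ((w-c₂)^N)]; exact hD
      have hDpos : (0:ℝ) < ‖(w-c₁)^N + (w-c₂)^N‖ := lt_of_lt_of_le (by positivity) hD'
      have hDne : P.eval w ≠ 0 := by
        rw [hevalP]; intro h; rw [h] at hDpos; simp at hDpos
      refine ⟨hDne, ?_⟩
      have hrident : (w - c₁)^N * (P.eval w)⁻¹ - 1 = -((w - c₂)^N) * (P.eval w)⁻¹ := by
        rw [hevalP]
        have hne : (w-c₁)^N + (w-c₂)^N ≠ 0 := by
          intro h; rw [hevalP] at hDne; exact hDne h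
        field_simp
        ring
      rw [hrident, hevalP, norm_mul, norm_neg, norm_inv]
      have hinv : ‖(w-c₁)^N + (w-c₂)^N‖⁻¹ ≤ ((1-κ^M) * ‖(w-c₁)^N‖)⁻¹ :=
        inv_anti₀ (by positivity) hD'
      calc ‖(w-c₂)^N‖ * ‖(w-c₁)^N + (w-c₂)^N‖⁻¹
          ≤ (κ^M * ‖(w-c₁)^N‖) * ((1-κ^M) * ‖(w-c₁)^N‖)⁻¹ := by
            apply mul_le_mul hxN hinv (by positivity) (by positivity)
      _ ≤ 2 * κ^M := hfrac _ hyNpos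
  -- the rational function r is approximable on K₁ ∪ K₂
  have hKc : IsCompact (K₁ ∪ K₂) := h1.union h2
  have happrox : Approx (K₁ ∪ K₂) (fun w => (w - c₁)^N * (P.eval w)⁻¹) := by
    have hinvP : Approx (K₁ ∪ K₂) (fun w => (P.eval w)⁻¹) := by
      have hprod : Approx (K₁ ∪ K₂)
          (fun w => (P.roots.map (fun ρ => (w - ρ)⁻¹)).prod) := by
        refine approx_multiset_inv_prod hKc _ (fun ρ hρ => ?_)
        refine approx_inv_line hKc (R := R) ?_ hR0 (δ := 1/2) (by norm_num) ?_
        · intro w hw; rcases hw with hw | hw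
          · exact hb1 w hw
          · exact hb2 w hw
        · intro w hw
          rw [hroots ρ hρ]
          rcases hw with hw | hw
          · have := hre1 w hw
            rw [abs_sub_comm, abs_of_nonneg (by linarith)]; linarith
          · have := hre2 w hw
            rw [abs_of_nonneg (by linarith)]; linarith
      refine approx_congr (f := fun w => (2:ℂ)⁻¹ * (P.roots.map (fun ρ => (w - ρ)⁻¹)).prod)
        ?_ ((approx_const _ _).mul hKc hprod)
      intro w hw
      have hev : P.eval w = 2 * (P.roots.map (fun ρ => (w - ρ))).prod := by
        conv_lhs => rw [hfact]
        rw [eval_mul, eval_C, eval_multiset_prod, Multiset.map_map]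
        simp
      rw [hev, mul_inv, ← Multiset.prod_map_inv]
    refine approx_congr (f := fun w => (fun w => Polynomial.eval w ((X - C c₁)^N)) w * (P.eval w)⁻¹)
      (fun w hw => by simp) ?_
    exact (approx_polyEval _ _).mul hKc hinvP
  -- extract the polynomial
  rw [approx_def] at happrox
  obtain ⟨q, hq⟩ := happrox (ε/2) (by positivity)
  refine ⟨q, fun w hw => ?_, fun w hw => ?_⟩
  · have hb := ((hDbound w).1 hw).2
    have hq' := hq w (Or.inl hw)
    have : ‖q.eval w‖ ≤ ‖(w - c₁)^N * (P.eval w)⁻¹‖ + ε/2 := by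
      have h9 := norm_sub_le ((w - c₁)^N * (P.eval w)⁻¹ - q.eval w) ((w - c₁)^N * (P.eval w)⁻¹)
      have h10 : (w - c₁)^N * (P.eval w)⁻¹ - q.eval w - ((w - c₁)^N * (P.eval w)⁻¹) = -q.eval w := by ring
      rw [h10] at h9
      rw [← norm_neg (q.eval w)]
      calc ‖-q.eval w‖ ≤ ‖(w - c₁)^N * (P.eval w)⁻¹ - q.eval w‖ + ‖(w - c₁)^N * (P.eval w)⁻¹‖ := h9
      _ ≤ ε/2 + ‖(w - c₁)^N * (P.eval w)⁻¹‖ := by linarith [hq']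
      _ = _ := by ring
    calc ‖q.eval w‖ ≤ ‖(w - c₁)^N * (P.eval w)⁻¹‖ + ε/2 := this
    _ ≤ 2*κ^M + ε/2 := by linarith [hb]
    _ ≤ ε := by linarith [hκM4]
  · have hb := ((hDbound w).2 hw).2
    have hq' := hq w (Or.inr hw)
    have h9 : ‖q.eval w - 1‖ ≤ ‖q.eval w - (w - c₁)^N * (P.eval w)⁻¹‖
        + ‖(w - c₁)^N * (P.eval w)⁻¹ - 1‖ := by
      have := norm_add_le (q.eval w - (w - c₁)^N * (P.eval w)⁻¹)
        ((w - c₁)^N * (P.eval w)⁻¹ - 1)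
      simpa using this
    rw [norm_sub_rev] at hq'
    calc ‖q.eval w - 1‖ ≤ ‖q.eval w - (w - c₁)^N * (P.eval w)⁻¹‖
        + ‖(w - c₁)^N * (P.eval w)⁻¹ - 1‖ := h9
    _ ≤ ε/2 + 2*κ^M := by linarith [hq', hb]
    _ ≤ ε := by linarith [hκM4]


/-- evaluation of a multivariable polynomial at a point of ℂⁿ -/
def ev {n : ℕ} (w : EuclideanSpace ℂ (Fin n)) (p : MvPolynomial (Fin n) ℂ) : ℂ :=
  MvPolynomial.eval (fun i => w i) p


lemma ev_def {n : ℕ} (w : EuclideanSpace ℂ (Fin n)) (p : MvPolynomial (Fin n) ℂ) :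
  ev w p = MvPolynomial.eval (fun i => w i) p := rfl

lemma ev_aeval {n : ℕ} (w : EuclideanSpace ℂ (Fin n)) (L : MvPolynomial (Fin n) ℂ)
    (q : Polynomial ℂ) : ev w (Polynomial.aeval L q) = q.eval (ev w L) := by
  have h3 : ∀ p : MvPolynomial (Fin n) ℂ,
      (MvPolynomial.aeval (R := ℂ) (fun i => w i)) p = ev w p := by
    intro p
    rw [ev, ← MvPolynomial.coe_aeval_eq_eval]
    rfl
  have h := Polynomial.aeval_algHom_apply (MvPolynomial.aeval (R := ℂ) (fun i => w i)) L q
  calc ev w (Polynomial.aeval L q)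
      = (MvPolynomial.aeval (R := ℂ) (fun i => w i)) (Polynomial.aeval L q) := (h3 _).symm
  _ = Polynomial.aeval ((MvPolynomial.aeval (R := ℂ) (fun i => w i)) L) q := h.symm
  _ = Polynomial.aeval (ev w L) q := by rw [h3]
  _ = Polynomial.eval (ev w L) q := by rw [← Polynomial.coe_aeval_eq_eval]

lemma continuous_ev {n : ℕ} (p : MvPolynomial (Fin n) ℂ) :
    Continuous fun w : EuclideanSpace ℂ (Fin n) => ev w p := by
  have h1 : Continuous fun w : EuclideanSpace ℂ (Fin n) => (fun i => w i) :=
    continuous_pi fun i => (continuous_apply i).comp (PiLp.continuous_ofLp 2 (fun _ : Fin n => ℂ))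
  exact (MvPolynomial.continuous_eval p).comp h1

lemma single_complex_smul {n : ℕ} (c : ℂ) (j : Fin n) (a : ℂ) :
    c • EuclideanSpace.single j a = EuclideanSpace.single j (c * a) := by
  ext i
  simp only [PiLp.smul_apply, EuclideanSpace.single_apply, smul_eq_mul]
  split_ifs <;> simp

lemma single_add' {n : ℕ} (j : Fin n) (a b : ℂ) :
    EuclideanSpace.single j (a + b) = EuclideanSpace.single j a + EuclideanSpace.single j b := by
  ext i
  simp only [PiLp.add_apply, EuclideanSpace.single_apply]
  split_ifs <;> simp

lemma real_smul_single {n : ℕ} (r : ℝ) (j : Fin n) (a : ℂ) :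
    r • EuclideanSpace.single j a = EuclideanSpace.single j ((r : ℂ) * a) := by
  have h : r • EuclideanSpace.single j a = ((r : ℂ)) • EuclideanSpace.single j a := by
    rw [← algebraMap_smul ℂ r (EuclideanSpace.single j a)]
    norm_num
  rw [h, single_complex_smul]

/-- every real-linear functional is the real part of the evaluation of a degree-1
multivariable polynomial -/
lemma exists_linear_poly {n : ℕ} (f : EuclideanSpace ℂ (Fin n) →L[ℝ] ℝ) :
    ∃ L : MvPolynomial (Fin n) ℂ, ∀ w : EuclideanSpace ℂ (Fin n), (ev w L).re = f w := by
  classical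
  set α : Fin n → ℂ := fun j =>
    ((f (EuclideanSpace.single j 1) : ℝ) : ℂ) -
      ((f (EuclideanSpace.single j Complex.I) : ℝ) : ℂ) * Complex.I with hα
  refine ⟨∑ j : Fin n, MvPolynomial.C (α j) * MvPolynomial.X j, fun w => ?_⟩
  have hev : ev w (∑ j : Fin n, MvPolynomial.C (α j) * MvPolynomial.X j)
      = ∑ j : Fin n, α j * w j := by
    rw [ev, map_sum]
    congr 1
    funext j
    simp
  rw [hev, Complex.re_sum]
  -- decompose w
  have hw : w = ∑ j : Fin n, ((w j) • EuclideanSpace.single j (1:ℂ)) := by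
    have h := (EuclideanSpace.basisFun (Fin n) ℂ).sum_repr w
    conv_lhs => rw [← h]
    refine Finset.sum_congr rfl fun j _ => ?_
    rw [EuclideanSpace.basisFun_repr, EuclideanSpace.basisFun_apply]
  have hfw : f w = ∑ j : Fin n, ((w j).re * f (EuclideanSpace.single j 1)
      + (w j).im * f (EuclideanSpace.single j Complex.I)) := by
    conv_lhs => rw [hw]
    rw [map_sum]
    congr 1
    funext j
    have hdecomp : (w j) • EuclideanSpace.single j (1:ℂ)
        = (w j).re • EuclideanSpace.single j (1:ℂ)
          + (w j).im • EuclideanSpace.single j Complex.I := by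
      rw [single_complex_smul, real_smul_single, real_smul_single, ← single_add']
      have he : ((w j).re : ℂ) * 1 + ((w j).im : ℂ) * Complex.I = w j * 1 := by
        rw [mul_one, mul_one]; exact Complex.re_add_im (w j)
      rw [he]
    rw [hdecomp, map_add, map_smul, map_smul]
    simp
  rw [hfw]
  congr 1
  funext j
  rw [hα]
  simp [Complex.mul_re, Complex.sub_re, Complex.sub_im, Complex.mul_im]
  ring


lemma mem_polyHull {n : ℕ} {X : Set (EuclideanSpace ℂ (Fin n))}
    {z : EuclideanSpace ℂ (Fin n)} :
    z ∈ polyHull X ↔ ∀ p : MvPolynomial (Fin n) ℂ, ∀ C : ℝ,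
      (∀ w ∈ X, ‖ev w p‖ ≤ C) → ‖ev z p‖ ≤ C := by
  simp only [polyHull, mem_setOf_eq, ev_def]

lemma subset_polyHull {n : ℕ} (X : Set (EuclideanSpace ℂ (Fin n))) : X ⊆ polyHull X :=
  fun z hz => mem_polyHull.mpr fun _ _ h => h z hz

/-- bound on a compact set for `ev · L` -/
lemma ev_bound {n : ℕ} {X : Set (EuclideanSpace ℂ (Fin n))} (hX : IsCompact X)
    (L : MvPolynomial (Fin n) ℂ) : ∃ R : ℝ, 0 ≤ R ∧ ∀ w ∈ X, ‖ev w L‖ ≤ R := by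
  obtain ⟨R, hR⟩ := hX.exists_bound_of_continuousOn (continuous_ev L).continuousOn
  exact ⟨|R|, abs_nonneg R, fun w hw => (hR w hw).trans (le_abs_self R)⟩

/-- If the values of `re (ev · L)` on `X` stay `δ`-away from `re (ev z L)`,
then `z` is not in the hull of `X`. -/
lemma not_mem_hull_strip {n : ℕ} {X : Set (EuclideanSpace ℂ (Fin n))} (hX : IsCompact X)
    (L : MvPolynomial (Fin n) ℂ) {z : EuclideanSpace ℂ (Fin n)} (hz : z ∈ polyHull X)
    {δ : ℝ} (hδ : 0 < δ)
    (hsep : ∀ w ∈ X, δ ≤ |(ev w L).re - (ev z L).re|) : False := by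
  obtain ⟨R, hR0, hR⟩ := ev_bound hX L
  set ζ : ℂ := ev z L with hζ
  set K : Set ℂ := (fun w => ev w L) '' X with hK
  have hKc : IsCompact K := hX.image (continuous_ev L)
  have hKb : ∀ v ∈ K, ‖v‖ ≤ R := by
    rintro v ⟨w, hw, rfl⟩; exact hR w hw
  have happ : Approx K (fun v => (v - ζ)⁻¹) := by
    refine approx_inv_line hKc hKb hR0 hδ ?_
    rintro v ⟨w, hw, rfl⟩; exact hsep w hw
  rw [approx_def] at happ
  obtain ⟨q, hq⟩ := happ (1/(2*(R + ‖ζ‖ + 1))) (by positivity)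
  set Q : Polynomial ℂ := 1 - (Polynomial.X - Polynomial.C ζ) * q with hQ
  have hQz : Q.eval ζ = 1 := by simp [hQ]
  have hQK : ∀ v ∈ K, ‖Q.eval v‖ ≤ 1/2 := by
    intro v hv
    have hvζ : v - ζ ≠ 0 := by
      intro h
      obtain ⟨w, hw, rfl⟩ := hv
      have h1 := hsep w hw
      have h2 : (ev w L).re - ζ.re = 0 := by
        have := congrArg Complex.re h
        simpa [Complex.sub_re] using this
      rw [h2] at h1; simp at h1; linarith
    have hev : Q.eval v = (v - ζ) * ((v - ζ)⁻¹ - q.eval v) := by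
      rw [hQ]
      simp only [eval_sub, eval_one, eval_mul, eval_X, eval_C]
      field_simp
    rw [hev, norm_mul]
    have h4 : ‖v - ζ‖ ≤ R + ‖ζ‖ := by
      have := norm_sub_le v ζ
      have := hKb v hv
      linarith
    calc ‖v - ζ‖ * ‖(v - ζ)⁻¹ - q.eval v‖ ≤ (R + ‖ζ‖) * (1/(2*(R + ‖ζ‖ + 1))) := by
          apply mul_le_mul h4 (hq v hv) (norm_nonneg _) (by positivity)
    _ ≤ 1/2 := by
        rw [mul_div_assoc', div_le_div_iff₀ (by positivity) (by norm_num)]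
        nlinarith [norm_nonneg ζ]
  have hfin := mem_polyHull.mp hz (Polynomial.aeval L Q) (1/2)
    (fun w hw => by rw [ev_aeval]; exact hQK _ (mem_image_of_mem _ hw))
  rw [ev_aeval, ← hζ, hQz] at hfin
  simp at hfin
  linarith

/-- The Kallin-type step. -/
lemma kallin_side {n : ℕ} {S₁ S₂ : Set (EuclideanSpace ℂ (Fin n))}
    (h₁c : IsCompact S₁) (h₂c : IsCompact S₂) (hS₂ : S₂.Nonempty)
    (L : MvPolynomial (Fin n) ℂ)
    (h₁ : ∀ w ∈ S₁, (ev w L).re ≤ 0) (h₂ : ∀ w ∈ S₂, 1 ≤ (ev w L).re)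
    {z : EuclideanSpace ℂ (Fin n)} (hz : z ∈ polyHull (S₁ ∪ S₂))
    (hζ : 1 ≤ (ev z L).re) : z ∈ polyHull S₂ := by
  rw [mem_polyHull]
  intro p C hC
  obtain ⟨w₀, hw₀⟩ := hS₂
  have hC0 : 0 ≤ C := le_trans (norm_nonneg _) (hC w₀ hw₀)
  -- bound of p on S₁
  obtain ⟨MA, hMA0, hMA⟩ : ∃ M : ℝ, 0 ≤ M ∧ ∀ w ∈ S₁, ‖ev w p‖ ≤ M := by
    obtain ⟨M, hM⟩ := h₁c.exists_bound_of_continuousOn (continuous_ev p).continuousOn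
    exact ⟨|M|, abs_nonneg M, fun w hw => (hM w hw).trans (le_abs_self M)⟩
  refine le_of_forall_pos_le_add ?_
  intro η hη
  -- choose ε'
  set ε' : ℝ := min (1/2) (η / (MA + 2*C + ‖ev z p‖ + 1)) with hε'
  have hε'pos : 0 < ε' := lt_min (by norm_num) (by positivity)
  have hε'le : ε' ≤ 1/2 := min_le_left _ _
  have hε'le2 : ε' ≤ η / (MA + 2*C + ‖ev z p‖ + 1) := min_le_right _ _
  -- the compact sets in ℂ
  obtain ⟨R₁, hR₁0, hR₁⟩ := ev_bound h₁c L
  obtain ⟨R₂, hR₂0, hR₂⟩ := ev_bound h₂c L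
  set ζ : ℂ := ev z L with hζdef
  set K₁ : Set ℂ := (fun w => ev w L) '' S₁ with hK₁
  set K₂ : Set ℂ := ((fun w => ev w L) '' S₂) ∪ {ζ} with hK₂
  have hK₁c : IsCompact K₁ := h₁c.image (continuous_ev L)
  have hK₂c : IsCompact K₂ := ((h₂c.image (continuous_ev L)).union isCompact_singleton)
  set R : ℝ := max (max R₁ R₂) ‖ζ‖ with hRdef
  have hR0 : 0 ≤ R := le_trans hR₁0 ((le_max_left _ _).trans (le_max_left _ _))
  have hb1 : ∀ v ∈ K₁, ‖v‖ ≤ R := by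
    rintro v ⟨w, hw, rfl⟩
    exact (hR₁ w hw).trans ((le_max_left _ _).trans (le_max_left _ _))
  have hb2 : ∀ v ∈ K₂, ‖v‖ ≤ R := by
    rintro v (⟨w, hw, rfl⟩ | hv)
    · exact (hR₂ w hw).trans ((le_max_right _ _).trans (le_max_left _ _))
    · rw [mem_singleton_iff] at hv; rw [hv]; exact le_max_right _ _
  have hre1 : ∀ v ∈ K₁, v.re ≤ 0 := by
    rintro v ⟨w, hw, rfl⟩; exact h₁ w hw
  have hre2 : ∀ v ∈ K₂, 1 ≤ v.re := by
    rintro v (⟨w, hw, rfl⟩ | hv)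
    · exact h₂ w hw
    · rw [mem_singleton_iff] at hv; rw [hv]; exact hζ
  obtain ⟨g, hg1, hg2⟩ := exists_sep_poly hK₁c hK₂c hR0 hb1 hb2 hre1 hre2 hε'pos
  -- the test polynomial
  set G : MvPolynomial (Fin n) ℂ := p * Polynomial.aeval L g with hG
  have hGev : ∀ w : EuclideanSpace ℂ (Fin n), ev w G = ev w p * g.eval (ev w L) := by
    intro w
    rw [hG, ev_def, map_mul, ← ev_def, ← ev_def, ev_aeval]
  have hbound : ∀ w ∈ S₁ ∪ S₂, ‖ev w G‖ ≤ max (MA * ε') (C * (1 + ε')) := by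
    rintro w (hw | hw)
    · rw [hGev, norm_mul]
      refine le_trans ?_ (le_max_left _ _)
      exact mul_le_mul (hMA w hw) (hg1 _ (mem_image_of_mem _ hw)) (norm_nonneg _) hMA0
    · rw [hGev, norm_mul]
      refine le_trans ?_ (le_max_right _ _)
      have hgw : ‖g.eval (ev w L)‖ ≤ 1 + ε' := by
        have h5 := hg2 _ (Or.inl (mem_image_of_mem _ hw))
        have h6 := norm_add_le (g.eval (ev w L) - 1) (1:ℂ)
        simp only [sub_add_cancel] at h6
        simp only [norm_one] at h6
        linarith
      exact mul_le_mul (hC w hw) hgw (norm_nonneg _) hC0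
  have hzG := mem_polyHull.mp hz G (max (MA * ε') (C * (1 + ε'))) hbound
  -- lower bound at z
  have hgζ : 1 - ε' ≤ ‖g.eval ζ‖ := by
    have h5 := hg2 ζ (Or.inr rfl)
    have h6 : ‖(1:ℂ)‖ - ‖g.eval ζ‖ ≤ ‖(1:ℂ) - g.eval ζ‖ := norm_sub_norm_le _ _
    rw [norm_sub_rev] at h5
    simp only [norm_one] at h6
    linarith
  have hlow : ‖ev z p‖ * (1 - ε') ≤ ‖ev z G‖ := by
    rw [hGev, norm_mul, ← hζdef]
    exact mul_le_mul_of_nonneg_left hgζ (norm_nonneg _)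
  have hmax : max (MA * ε') (C * (1 + ε')) ≤ C + (MA + C) * ε' := by
    apply max_le
    · nlinarith
    · nlinarith
  have hfinal : ‖ev z p‖ * (1 - ε') ≤ C + (MA + C) * ε' := le_trans hlow (le_trans hzG hmax)
  have h7 : ‖ev z p‖ ≤ C + (MA + C + ‖ev z p‖) * ε' := by nlinarith [norm_nonneg (ev z p)]
  have h8 : (MA + C + ‖ev z p‖) * ε' ≤ η := by
    have h9 : (MA + C + ‖ev z p‖) ≤ (MA + 2*C + ‖ev z p‖ + 1) := by linarith
    calc (MA + C + ‖ev z p‖) * ε' ≤ (MA + 2*C + ‖ev z p‖ + 1) * ε' := by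
          apply mul_le_mul_of_nonneg_right h9 hε'pos.le
    _ ≤ (MA + 2*C + ‖ev z p‖ + 1) * (η / (MA + 2*C + ‖ev z p‖ + 1)) := by
          apply mul_le_mul_of_nonneg_left hε'le2 (by positivity)
    _ = η := by field_simp
  linarith

/-- compact convex sets contain their polynomial hull -/
lemma polyHull_subset_of_convex {n : ℕ} {T : Set (EuclideanSpace ℂ (Fin n))}
    (hT : IsCompact T) (hconv : Convex ℝ T) : polyHull T ⊆ T := by
  intro z hz
  by_contra hzT
  rcases T.eq_empty_or_nonempty with rfl | hTne
  · have := mem_polyHull.mp hz 1 (-1) (by simp)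
    rw [ev_def] at this
    simp at this
    linarith
  obtain ⟨f, u, hfu, hufz⟩ := geometric_hahn_banach_closed_point hconv hT.isClosed hzT
  obtain ⟨L, hL⟩ := exists_linear_poly f
  refine not_mem_hull_strip hT L hz (δ := f z - u) (by linarith) ?_
  intro w hw
  rw [hL, hL]
  have := hfu w hw
  rw [abs_sub_comm, abs_of_nonneg (by linarith)]
  linarith


end KallinAux

/-- Consequence of Kallin's lemma and the Oka–Weil theorem: if `C` and `T` are disjoint
compact convex sets in ℂⁿ and `A ⊆ C` is compact and polynomially convex, then `A ∪ T`
is polynomially convex. -/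
theorem kallin_union_polynomially_convex (n : ℕ) (hn : 1 ≤ n)
    (C T : Set (EuclideanSpace ℂ (Fin n)))
    (hCcompact : IsCompact C) (hCconv : Convex ℝ C)
    (hTcompact : IsCompact T) (hTconv : Convex ℝ T)
    (hdisj : Disjoint C T)
    (A : Set (EuclideanSpace ℂ (Fin n))) (hAC : A ⊆ C) (hAcompact : IsCompact A)
    (hApc : IsPolynomiallyConvex A) :
    IsPolynomiallyConvex (A ∪ T) := by
  classical
  have hApc' : polyHull A = A := hApc
  rcases T.eq_empty_or_nonempty with rfl | hTne
  · simpa [IsPolynomiallyConvex, union_empty] using hApc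
  rcases A.eq_empty_or_nonempty with rfl | hAne
  · show polyHull (∅ ∪ T) = ∅ ∪ T
    rw [empty_union]
    exact Subset.antisymm (KallinAux.polyHull_subset_of_convex hTcompact hTconv)
      (KallinAux.subset_polyHull T)
  obtain ⟨f, u, v, hfu, huv, hfv⟩ := geometric_hahn_banach_compact_closed hCconv hCcompact
    hTconv hTcompact.isClosed hdisj
  obtain ⟨L₀, hL₀⟩ := KallinAux.exists_linear_poly f
  have hc : (0:ℝ) < v - u := by linarith
  set L : MvPolynomial (Fin n) ℂ :=
    MvPolynomial.C (((v - u : ℝ) : ℂ))⁻¹ * (L₀ - MvPolynomial.C ((u : ℝ) : ℂ)) with hLdef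
  have hLre : ∀ w : EuclideanSpace ℂ (Fin n), (KallinAux.ev w L).re = (f w - u) / (v - u) := by
    intro w
    have hev : KallinAux.ev w L
        = (((v - u : ℝ) : ℂ))⁻¹ * (KallinAux.ev w L₀ - ((u : ℝ) : ℂ)) := by
      rw [KallinAux.ev_def, hLdef, map_mul, map_sub, MvPolynomial.eval_C, MvPolynomial.eval_C,
        ← KallinAux.ev_def]
    rw [hev, ← Complex.ofReal_inv, Complex.re_ofReal_mul, Complex.sub_re, Complex.ofReal_re,
      hL₀ w]
    rw [div_eq_inv_mul]
  have hLC : ∀ w ∈ C, (KallinAux.ev w L).re ≤ 0 := by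
    intro w hw
    rw [hLre]
    exact div_nonpos_of_nonpos_of_nonneg (by linarith [hfu w hw]) hc.le
  have hLT : ∀ w ∈ T, 1 ≤ (KallinAux.ev w L).re := by
    intro w hw
    rw [hLre, le_div_iff₀ hc]
    linarith [hfv w hw]
  show polyHull (A ∪ T) = A ∪ T
  refine Subset.antisymm ?_ (KallinAux.subset_polyHull _)
  intro z hz
  rcases le_or_gt ((KallinAux.ev z L).re) 0 with h0 | h0
  · left
    have hz' : z ∈ polyHull (T ∪ A) := by rwa [union_comm] at hz
    have hev1 : ∀ w : EuclideanSpace ℂ (Fin n),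
        (KallinAux.ev w (MvPolynomial.C 1 - L)).re = 1 - (KallinAux.ev w L).re := by
      intro w
      rw [KallinAux.ev_def, map_sub, MvPolynomial.eval_C, ← KallinAux.ev_def, Complex.sub_re,
        Complex.one_re]
    have hmem := KallinAux.kallin_side hTcompact hAcompact hAne (MvPolynomial.C 1 - L)
      (fun w hw => by rw [hev1]; linarith [hLT w hw])
      (fun w hw => by rw [hev1]; linarith [hLC w (hAC hw)])
      hz' (by rw [hev1]; linarith)
    rwa [hApc'] at hmem
  · rcases lt_or_ge ((KallinAux.ev z L).re) 1 with h1 | h1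
    · exfalso
      refine KallinAux.not_mem_hull_strip (hAcompact.union hTcompact) L hz
        (δ := min ((KallinAux.ev z L).re) (1 - (KallinAux.ev z L).re))
        (lt_min h0 (by linarith)) ?_
      rintro w (hw | hw)
      · have hw0 := hLC w (hAC hw)
        rw [abs_sub_comm, abs_of_nonneg (by linarith)]
        calc min ((KallinAux.ev z L).re) (1 - (KallinAux.ev z L).re)
            ≤ (KallinAux.ev z L).re := min_le_left _ _
        _ ≤ (KallinAux.ev z L).re - (KallinAux.ev w L).re := by linarith
      · have hw1 := hLT w hw
        rw [abs_of_nonneg (by linarith)]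
        calc min ((KallinAux.ev z L).re) (1 - (KallinAux.ev z L).re)
            ≤ 1 - (KallinAux.ev z L).re := min_le_right _ _
        _ ≤ (KallinAux.ev w L).re - (KallinAux.ev z L).re := by linarith
    · right
      have hzT : z ∈ polyHull T := KallinAux.kallin_side hAcompact hTcompact hTne L
        (fun w hw => hLC w (hAC hw)) hLT hz h1
      exact KallinAux.polyHull_subset_of_convex hTcompact hTconv hzT
end
end
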